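/- arXiv:2203.04105 — 7 statements merged into one kernel-verified Lean document; each statement's English description precedes it below -/
import Mathlib

section
/- Let M be a k×k matrix over a commutative ring, and let n = (n_1,...,n_k) be positive integers with K = n_1+...+n_k. Let W be the K×k block matrix whose (i,j) block is the all-ones column vector of height n_i if i=j and zero otherwise. Then det(W M Wᵀ − 2·Id_K) = (−2)^{K−k} · det(Δ_n M − 2·Id_k), where Δ_n is the diagonal matrix with entries n_1,...,n_k. -/
/-!
Since `Wᵀ W = Δ_n`, the matrices `W (M Wᵀ)` and `(M Wᵀ) W = M Δ_n` have characteristic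
polynomials differing by the factor `X ^ (K - k)`; evaluating at `2` and using that `M Δ_n`
and `Δ_n M` have the same characteristic polynomial gives the formula.
-/

open Matrix Polynomial

namespace Matrix

variable {R m n : Type*} [CommRing R] [Fintype m] [DecidableEq m] [Fintype n] [DecidableEq n]

theorem det_sub_smul_one_eq_neg_one_pow_mul_eval_charpoly (A : Matrix m m R) (t : R) :
    (A - t • 1).det = (-1) ^ Fintype.card m * A.charpoly.eval t := by
  rw [eval_charpoly, ← det_neg, neg_sub, smul_one_eq_diagonal, scalar_apply]

theorem det_mul_sub_smul_one_of_card_le (A : Matrix m n R) (B : Matrix n m R) (t : R)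
    (h : Fintype.card n ≤ Fintype.card m) :
    (A * B - t • 1).det = (-t) ^ (Fintype.card m - Fintype.card n) * (B * A - t • 1).det := by
  rw [det_sub_smul_one_eq_neg_one_pow_mul_eval_charpoly, charpoly_mul_comm_of_le A B h,
    det_sub_smul_one_eq_neg_one_pow_mul_eval_charpoly, eval_mul, eval_pow, eval_X]
  obtain ⟨d, hd⟩ := Nat.exists_eq_add_of_le h
  rw [hd, Nat.add_sub_cancel_left, neg_pow t]
  ring

theorem det_mul_sub_smul_one_comm (A B : Matrix n n R) (t : R) :
    (A * B - t • 1).det = (B * A - t • 1).det := by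
  simp only [det_sub_smul_one_eq_neg_one_pow_mul_eval_charpoly, charpoly_mul_comm]

theorem transpose_mul_self_of_eq_ite_fst {ι : Type*} [Fintype ι] [DecidableEq ι] {d : ι → ℕ}
    (W : Matrix (Σ i, Fin (d i)) ι R) (hW : ∀ p j, W p j = if p.1 = j then 1 else 0) :
    Wᵀ * W = diagonal fun i => (d i : R) := by
  ext i j
  simp only [mul_apply, transpose_apply, hW, ← Finset.univ_sigma_univ, Finset.sum_sigma]
  by_cases h : i = j
  · subst h
    simp
  · simp [h, Ne.symm h]

end Matrix

/-- For a k×k matrix `M` over a commutative ring and positive integers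
`n = (n_1, …, n_k)` with `K = ∑ n_i`, letting `W` be the K×k block matrix whose
i-th block is the all-ones column of height `n_i` in column `i`,
`det (W M Wᵀ − 2·Id_K) = (−2)^(K−k) · det (Δ_n M − 2·Id_k)`. -/
theorem blowup_det_formula (R : Type*) [CommRing R] (k : ℕ) (n : Fin k → ℕ)
    (hn : ∀ i, 0 < n i) (M : Matrix (Fin k) (Fin k) R)
    (W : Matrix (Σ i : Fin k, Fin (n i)) (Fin k) R)
    (hW : ∀ p j, W p j = if p.1 = j then 1 else 0) :
    (W * M * W.transpose - (2 : R) • (1 : Matrix (Σ i : Fin k, Fin (n i))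
        (Σ i : Fin k, Fin (n i)) R)).det
      = (-2 : R) ^ ((∑ i, n i) - k) *
        (Matrix.diagonal (fun i => (n i : R)) * M - (2 : R) • (1 : Matrix (Fin k) (Fin k) R)).det := by
  have hcard : Fintype.card (Σ i : Fin k, Fin (n i)) = ∑ i, n i := by simp
  have hk : Fintype.card (Fin k) ≤ Fintype.card (Σ i : Fin k, Fin (n i)) := by
    rw [hcard, Fintype.card_fin]
    simpa using Finset.card_nsmul_le_sum Finset.univ n 1 fun i _ => hn i
  rw [Matrix.mul_assoc, det_mul_sub_smul_one_of_card_le W (M * Wᵀ) 2 hk, hcard, Fintype.card_fin,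
    Matrix.mul_assoc, transpose_mul_self_of_eq_ite_fst W hW, det_mul_sub_smul_one_comm]
end

section
/- For the complete graph K_k, the polynomial p_{K_k}(n_1,...,n_k) = det(Δ_n M_{K_k} − 2·Id_k) equals ∏_{i=1}^k (n_i − 2) + Σ_{i=1}^k n_i ∏_{i'≠i} (n_{i'} − 2). -/
/-!
The matrix is `diagonal (n - 2) + vecMulVec n 1`, a rank-one perturbation of a diagonal matrix.
Expanding the determinant row by row, every term taking two rows from the rank-one part has two
proportional rows and vanishes, so `det (A + u vᵀ) = det A + ∑ᵢ uᵢ det (A with row i replaced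
by v) = det A + vᵀ adj(A) u`. For `A = diagonal d` the adjugate is `diagonal (∏_{j ≠ i} d j)`.
-/

open MvPolynomial Finset

namespace Matrix

variable {n R : Type*} [Fintype n] [DecidableEq n] [CommRing R]

theorem det_add_vecMulVec_eq_add_sum_updateRow (A : Matrix n n R) (u v : n → R) :
    (A + vecMulVec u v).det = A.det + ∑ i, u i * (A.updateRow i v).det := by
  suffices h : ∀ s : Finset n, ∀ (A : Matrix n n R) (u : n → R), (∀ i ∉ s, u i = 0) →
      (A + vecMulVec u v).det = A.det + ∑ i, u i * (A.updateRow i v).det from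
    h univ A u fun i hi => absurd (mem_univ i) hi
  intro s
  induction s using Finset.induction_on with
  | empty =>
    intro A u hu
    obtain rfl : u = 0 := funext fun i => hu i (notMem_empty i)
    simp
  | insert j s _ ih =>
    intro A u hu
    -- move the perturbation of row `j` into `A` and apply the induction hypothesis
    set A' := A.updateRow j (A j + u j • v)
    set u' := Function.update u j 0
    have hsplit : A + vecMulVec u v = A' + vecMulVec u' v := by
      ext a b
      by_cases hab : a = j
      · subst hab; simp [A', u', vecMulVec_apply]
      · simp [A', u', vecMulVec_apply, hab]
    have hu' : ∀ i ∉ s, u' i = 0 := by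
      intro i hi
      by_cases hij : i = j
      · simp [u', hij]
      · simp [u', hij, hu i (by simp [hij, hi])]
    have hdetA' : A'.det = A.det + u j * (A.updateRow j v).det := by
      rw [det_updateRow_add, det_updateRow_smul, updateRow_eq_self]
    have hrow : ∀ i ≠ j, (A'.updateRow i v).det = (A.updateRow i v).det := by
      intro i hij
      calc (A'.updateRow i v).det
          = ((A.updateRow i v).updateRow j
              (A.updateRow i v j + u j • A.updateRow i v i)).det := by
            rw [updateRow_comm _ (Ne.symm hij), updateRow_self, updateRow_ne (Ne.symm hij)]
        _ = (A.updateRow i v).det := det_updateRow_add_smul_self _ (Ne.symm hij) _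
    rw [hsplit, ih A' u' hu', hdetA', add_assoc, Fintype.sum_eq_add_sum_compl j,
      Fintype.sum_eq_add_sum_compl j (fun i => u i * _)]
    simp only [u', Function.update_self, zero_mul, zero_add]
    congr 2
    refine sum_congr rfl fun i hi => ?_
    have hij : i ≠ j := by simpa using hi
    rw [hrow i hij, Function.update_of_ne hij]

theorem det_add_vecMulVec (A : Matrix n n R) (u v : n → R) :
    (A + vecMulVec u v).det = A.det + v ⬝ᵥ A.adjugate *ᵥ u := by
  rw [det_add_vecMulVec_eq_add_sum_updateRow, dotProduct_mulVec, dotProduct_comm,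
    ← mulVec_transpose, adjugate_transpose, ← cramer_eq_adjugate_mulVec]
  simp only [dotProduct, cramer_transpose_apply]

theorem det_diagonal_add_vecMulVec (d u v : n → R) :
    (diagonal d + vecMulVec u v).det = ∏ i, d i + ∑ i, u i * v i * ∏ j ∈ univ.erase i, d j := by
  simp only [det_add_vecMulVec, det_diagonal, adjugate_diagonal, mulVec_diagonal, dotProduct]
  congr 1
  exact sum_congr rfl fun i _ => by ring

end Matrix

/-- for the complete graph `K_k` (so `M = J + Id`),
`p_{K_k}(n) = ∏ᵢ (nᵢ − 2) + Σᵢ nᵢ ∏_{i'≠i} (n_{i'} − 2)`. -/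
theorem blowup_poly_complete_graph (k : ℕ) (M : Matrix (Fin k) (Fin k) ℝ)
    (hM : ∀ i j, M i j = if i = j then 2 else 1) :
    Matrix.det (Matrix.of fun i j : Fin k =>
        X i * C (M i j) - if i = j then (C 2 : MvPolynomial (Fin k) ℝ) else 0)
      = ∏ i : Fin k, (X i - C 2)
        + ∑ i : Fin k, X i * ∏ i' ∈ univ.erase i, (X i' - C 2) := by
  have hmat : (Matrix.of fun i j : Fin k =>
        X i * C (M i j) - if i = j then (C 2 : MvPolynomial (Fin k) ℝ) else 0)
      = Matrix.diagonal (fun i => X i - C 2) + Matrix.vecMulVec X 1 := by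
    refine Matrix.ext fun i j => ?_
    by_cases hij : i = j
    · subst hij
      simp only [Matrix.of_apply, hM, if_pos, Matrix.add_apply, Matrix.diagonal_apply_eq,
        Matrix.vecMulVec_apply, Pi.one_apply, map_ofNat]
      ring
    · simp [hM, hij]
  rw [hmat, Matrix.det_diagonal_add_vecMulVec]
  simp only [Pi.one_apply, mul_one]
end

section
/- Let M be a real symmetric k×k matrix. Define the family F of subsets I ⊆ {1,...,k} such that the principal submatrix M_{I×I} is invertible (with the empty set feasible). Then F satisfies the symmetric exchange axiom: for all A, B ∈ F and x ∈ A Δ B, there exists y ∈ A Δ B with A Δ {x,y} ∈ F. In other words, (({1,...,k}), F) is a delta-matroid provided every index lies in some feasible set. -/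
/-!
Principal pivoting. Let `T` be the identity with its rows in `A` replaced by those of `M`, and
`T'` the identity with its rows outside `A` replaced by those of `M`. If `M[A]` is invertible, so
is `T`, and `N = T' T⁻¹` is the principal pivot transform of `M` on `A`: where `M` sends
`(u_A, u_rest)` to `(w_A, w_rest)`, `N` sends `(w_A, u_rest)` to `(u_A, w_rest)`. Since
`N T = T'`, the identity with its rows in `S` taken from `N`, times `T`, is the identity with its
rows in `A Δ S` taken from `M`; taking determinants gives Tucker's formula
`det M[A Δ S] = det N[S] * det M[A]`. Symmetry of `M` makes `diag(±1) * N` symmetric, so the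
zero pattern of `N` is symmetric.

Now `B` feasible means `N[A Δ B]` invertible. For `x ∈ A Δ B`, either `N x x ≠ 0`, or the
column `x` of `N[A Δ B]` has a nonzero entry `N y x`, hence `N x y ≠ 0` too and
`det N[{x, y}] = - N x y * N y x ≠ 0`. Either way `A Δ {x, y}` is feasible.
-/

open Finset Matrix

namespace Matrix

variable {K m n : Type*}

section RowPiecewise

variable [DecidableEq m]

def rowPiecewise (S : Finset m) (P Q : Matrix m n K) : Matrix m n K :=
  of fun i => if i ∈ S then P i else Q i

@[simp]
theorem rowPiecewise_apply (S : Finset m) (P Q : Matrix m n K) (i : m) (j : n) :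
    rowPiecewise S P Q i j = if i ∈ S then P i j else Q i j := by
  simp only [rowPiecewise, of_apply]
  split_ifs <;> rfl

theorem rowPiecewise_symmDiff (A S : Finset m) (P Q : Matrix m n K) :
    rowPiecewise S (rowPiecewise A Q P) (rowPiecewise A P Q) = rowPiecewise (symmDiff A S) P Q := by
  ext i j
  by_cases hA : i ∈ A <;> by_cases hS : i ∈ S <;> simp [hA, hS, mem_symmDiff]

theorem rowPiecewise_mul {l : Type*} [Fintype n] [NonUnitalNonAssocSemiring K] (S : Finset m)
    (P Q : Matrix m n K) (R : Matrix n l K) :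
    rowPiecewise S P Q * R = rowPiecewise S (P * R) (Q * R) := by
  ext i j
  by_cases hi : i ∈ S <;> simp [mul_apply, hi]

theorem rowPiecewise_one_mulVec_apply [Fintype m] [NonAssocSemiring K] (S : Finset m)
    (P : Matrix m m K) (v : m → K) (i : m) :
    (rowPiecewise S P 1 *ᵥ v) i = if i ∈ S then (P *ᵥ v) i else v i := by
  by_cases hi : i ∈ S <;> simp [mulVec, dotProduct, hi, one_apply, ite_mul]

theorem det_rowPiecewise_one [Fintype m] [CommRing K] (S : Finset m) (P : Matrix m m K) :
    (rowPiecewise S P 1).det = (P.submatrix ((↑) : S → m) (↑)).det := by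
  rw [twoBlockTriangular_det _ (· ∈ S)]
  · have h_compl : toSquareBlockProp (rowPiecewise S P 1) (· ∉ S) = 1 := by
      ext i j
      simp only [toSquareBlockProp, toBlock_apply, rowPiecewise_apply, i.2, if_false, one_apply,
        Subtype.ext_iff]
    have h_block : toSquareBlockProp (rowPiecewise S P 1) (· ∈ S) = P.submatrix (↑) (↑) := by
      ext i j
      simp only [toSquareBlockProp, toBlock_apply, rowPiecewise_apply, i.2, if_true,
        submatrix_apply]
    rw [h_compl, h_block, det_one, mul_one]
    -- the two sides differ only in the `Fintype` instance on `S`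
    convert rfl
  · intro i hi j hj
    simp only [rowPiecewise_apply, hi, if_false, one_apply]
    exact if_neg (ne_of_mem_of_not_mem hj hi).symm

end RowPiecewise

theorem IsSymm.transpose_mul_mul [Fintype m] [Fintype n] [CommSemiring K] {S : Matrix m m K}
    (hS : S.IsSymm) (X : Matrix m n K) : (Xᵀ * S * X).IsSymm := by
  rw [IsSymm, transpose_mul, transpose_mul, hS.eq, transpose_transpose, Matrix.mul_assoc]

section Field

variable [Field K] [Fintype n] [DecidableEq n] {M N : Matrix n n K} {A : Finset n}

theorem det_rowPiecewise_singleton_ne_zero {x : n} (hxx : N x x ≠ 0) :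
    (rowPiecewise {x} N 1).det ≠ 0 := by
  rw [Ne, ← exists_mulVec_eq_zero_iff]
  rintro ⟨v, hv, hNv⟩
  have hv_out : ∀ i, i ≠ x → v i = 0 := fun i hi => by
    simpa [rowPiecewise_one_mulVec_apply, hi] using congrFun hNv i
  have hvx : v x = 0 := by
    have := congrFun hNv x
    rw [rowPiecewise_one_mulVec_apply, if_pos (mem_singleton_self x), mulVec, dotProduct,
      Fintype.sum_eq_single x fun i hi => by rw [hv_out i hi, mul_zero]] at this
    exact (mul_eq_zero.mp this).resolve_left hxx
  exact hv (funext fun i => if hi : i = x then hi ▸ hvx else hv_out i hi)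

theorem det_rowPiecewise_pair_ne_zero {x y : n} (hne : x ≠ y) (hxx : N x x = 0)
    (hyx : N y x ≠ 0) (hxy : N x y ≠ 0) : (rowPiecewise {x, y} N 1).det ≠ 0 := by
  rw [Ne, ← exists_mulVec_eq_zero_iff]
  rintro ⟨v, hv, hNv⟩
  have hv_out : ∀ i, i ≠ x ∧ i ≠ y → v i = 0 := fun i hi => by
    simpa [rowPiecewise_one_mulVec_apply, hi.1, hi.2] using congrFun hNv i
  have hNv_pair : ∀ i ∈ ({x, y} : Finset n), N i x * v x + N i y * v y = 0 := fun i hi => by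
    have := congrFun hNv i
    rwa [rowPiecewise_one_mulVec_apply, if_pos hi, mulVec, dotProduct,
      Fintype.sum_eq_add x y hne fun j hj => by rw [hv_out j hj, mul_zero]] at this
  have hvy : v y = 0 := by
    have := hNv_pair x (by simp)
    rw [hxx, zero_mul, zero_add] at this
    exact (mul_eq_zero.mp this).resolve_left hxy
  have hvx : v x = 0 := by
    have := hNv_pair y (by simp)
    rw [hvy, mul_zero, add_zero] at this
    exact (mul_eq_zero.mp this).resolve_left hyx
  refine hv (funext fun i => ?_)
  by_cases hix : i = x
  · exact hix ▸ hvx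
  by_cases hiy : i = y
  · exact hiy ▸ hvy
  exact hv_out i ⟨hix, hiy⟩

theorem exists_det_rowPiecewise_pair_ne_zero (hN : ∀ i j, N i j ≠ 0 → N j i ≠ 0)
    {W : Finset n} (hW : (rowPiecewise W N 1).det ≠ 0) {x : n} (hx : x ∈ W) :
    ∃ y ∈ W, (rowPiecewise {x, y} N 1).det ≠ 0 := by
  by_cases hxx : N x x = 0
  · obtain ⟨y, hyW, hyx⟩ : ∃ y ∈ W, N y x ≠ 0 := by
      by_contra! h
      refine hW (exists_mulVec_eq_zero_iff.mp ⟨Pi.single x 1, by simp, funext fun i => ?_⟩)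
      rw [rowPiecewise_one_mulVec_apply, mulVec_single_one]
      split_ifs with hi
      · exact h i hi
      · exact Pi.single_eq_of_ne (ne_of_mem_of_not_mem hx hi).symm 1
    have hne : x ≠ y := by rintro rfl; exact hyx hxx
    exact ⟨y, hyW, det_rowPiecewise_pair_ne_zero hne hxx hyx (hN y x hyx)⟩
  · exact ⟨x, hx, by simpa using det_rowPiecewise_singleton_ne_zero hxx⟩

variable (M A) in
noncomputable def pivot : Matrix n n K :=
  rowPiecewise A 1 M * (rowPiecewise A M 1)⁻¹

theorem det_rowPiecewise_symmDiff (hA : (rowPiecewise A M 1).det ≠ 0) (S : Finset n) :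
    (rowPiecewise (symmDiff A S) M 1).det =
      (rowPiecewise S (pivot M A) 1).det * (rowPiecewise A M 1).det := by
  rw [← det_mul, rowPiecewise_mul, pivot, nonsing_inv_mul_cancel_right _ _ hA.isUnit, one_mul,
    rowPiecewise_symmDiff]

theorem isSymm_transpose_rowPiecewise_mul_diagonal_mul (hM : M.IsSymm) (A : Finset n) :
    ((rowPiecewise A M 1)ᵀ * diagonal (fun i => if i ∈ A then -1 else 1) *
      rowPiecewise A 1 M).IsSymm := by
  have h_apply : ∀ i j, ((rowPiecewise A M 1)ᵀ * diagonal (fun i => if i ∈ A then -1 else 1) *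
      rowPiecewise A 1 M : Matrix n n K) i j =
        (if i ∈ A then 0 else M i j) - (if j ∈ A then M j i else 0) := by
    intro i j
    have summand : ∀ a, (if a ∈ A then M a i else if a = i then 1 else 0) *
        (if a ∈ A then -1 else 1) * (if a ∈ A then (if a = j then 1 else 0) else M a j) =
          (if a = i then (if i ∈ A then 0 else M i j) else 0) -
            (if a = j then (if j ∈ A then M j i else 0) else 0) := by
      intro a
      by_cases ha : a ∈ A <;> by_cases hi : a = i <;> by_cases hj : a = j <;> subst_vars <;>
        simp [*]
    rw [mul_apply]
    simp only [mul_diagonal, transpose_apply, rowPiecewise_apply, one_apply, summand,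
      sum_sub_distrib, sum_ite_eq']
    simp
  refine IsSymm.ext_iff.mpr fun i j => ?_
  rw [h_apply, h_apply]
  by_cases hi : i ∈ A <;> by_cases hj : j ∈ A <;> simp [hi, hj, hM.apply i j]

theorem isSymm_diagonal_mul_pivot (hM : M.IsSymm) (hA : (rowPiecewise A M 1).det ≠ 0) :
    (diagonal (fun i => if i ∈ A then -1 else 1) * pivot M A).IsSymm := by
  have hT : IsUnit (rowPiecewise A M 1)ᵀ.det := by rw [det_transpose]; exact hA.isUnit
  have h_congr : diagonal (fun i => if i ∈ A then -1 else 1) * pivot M A =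
      (rowPiecewise A M 1)⁻¹ᵀ * ((rowPiecewise A M 1)ᵀ *
        diagonal (fun i => if i ∈ A then -1 else 1) * rowPiecewise A 1 M) *
          (rowPiecewise A M 1)⁻¹ := by
    rw [transpose_nonsing_inv, pivot, mul_assoc (rowPiecewise A M 1)ᵀ,
      nonsing_inv_mul_cancel_left _ _ hT, mul_assoc]
  rw [h_congr]
  exact (isSymm_transpose_rowPiecewise_mul_diagonal_mul hM A).transpose_mul_mul _

theorem pivot_apply_ne_zero_symm (hM : M.IsSymm) (hA : (rowPiecewise A M 1).det ≠ 0) {i j : n}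
    (hij : pivot M A i j ≠ 0) : pivot M A j i ≠ 0 := by
  intro hji
  have h_sign := (isSymm_diagonal_mul_pivot hM hA).apply i j
  rw [diagonal_mul, diagonal_mul, hji, mul_zero] at h_sign
  exact hij ((mul_eq_zero.mp h_sign.symm).resolve_left (by split_ifs <;> norm_num))

end Field

end Matrix

/-- for a real symmetric k×k matrix `M`, the family of subsets
`I ⊆ {1,…,k}` with `M_{I×I}` invertible satisfies the symmetric exchange axiom
(the linear delta-matroid of `M`). -/
theorem principal_minors_symmetric_exchange (k : ℕ) (M : Matrix (Fin k) (Fin k) ℝ)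
    (hSymm : M.IsSymm)
    (F : Finset (Fin k) → Prop)
    (hF : ∀ I, F I ↔ (M.submatrix (fun i : I => (i : Fin k)) (fun i : I => (i : Fin k))).det ≠ 0) :
    ∀ A B : Finset (Fin k), F A → F B → ∀ x ∈ symmDiff A B,
      ∃ y ∈ symmDiff A B, F (symmDiff A ({x, y} : Finset (Fin k))) := by
  intro A B hA hB x hx
  simp only [hF, ← det_rowPiecewise_one] at hA hB ⊢
  have hAB : (rowPiecewise (symmDiff A B) (pivot M A) 1).det ≠ 0 := by
    rw [← symmDiff_symmDiff_cancel_left A B, det_rowPiecewise_symmDiff hA] at hB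
    exact left_ne_zero_of_mul hB
  obtain ⟨y, hy, hxy⟩ :=
    exists_det_rowPiecewise_pair_ne_zero (fun _ _ => pivot_apply_ne_zero_symm hSymm hA) hAB hx
  exact ⟨y, hy, by rw [det_rowPiecewise_symmDiff hA]; exact mul_ne_zero hxy hA⟩
end

section
/- The blowup polynomial p_G(n_1,...,n_k) = det(Δ_n M_G − 2·Id_k) of a finite simple connected graph G is a symmetric polynomial in n_1,...,n_k if and only if G is a complete graph. -/
/-!
Evaluating `p_G` at the indicator vector of a pair `{a, b}` of distinct vertices kills all
variables but two, and the Weinstein–Aronszajn identity `det (1 + P Q) = det (1 + Q P)` reduces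
the determinant to a `2 × 2` one: `4 p_G(1_{a,b}) = -(-2)^k d(a,b)²`. A symmetric polynomial takes
the same value at all these points, so a connected graph with a non-adjacent pair (distance `≥ 2`)
next to an edge (distance `1`) cannot have a symmetric blowup polynomial. Conversely, renaming the
variables by `σ` conjugates `Δ_X M - 2 Id` by `σ` up to replacing `M` by `M (σ⁻¹ ·) (σ⁻¹ ·)`, and
for a complete graph `M = J + Id` is invariant under such simultaneous permutations.
-/

open MvPolynomial Matrix Equiv

namespace Matrix

variable {n ι K : Type*} [Fintype n] [DecidableEq n] [Fintype ι] [DecidableEq ι] [Field K]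

theorem det_diagonal_indicator_mul_sub_smul_one {e : ι → n} (he : Function.Injective e)
    (A : Matrix n n K) {c : K} (hc : c ≠ 0) :
    (diagonal ((Set.range e).indicator 1) * A - c • 1).det
      = (-c) ^ Fintype.card n * (1 - c⁻¹ • A.submatrix e e).det := by
  set P : Matrix n ι K := (1 : Matrix n n K).submatrix id e
  have hPP : P * Pᵀ = diagonal ((Set.range e).indicator 1) := by
    ext r s
    by_cases hs : s ∈ Set.range e
    · obtain ⟨y, rfl⟩ := hs
      by_cases hr : r = e y <;> simp [P, mul_apply, diagonal, one_apply, hr, he.eq_iff]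
    · simp_all [P, mul_apply, diagonal, one_apply]
  have hPAP : Pᵀ * A * P = A.submatrix e e := by
    ext i j
    simp [P, mul_apply, one_apply]
  calc (diagonal ((Set.range e).indicator 1) * A - c • 1).det
      = ((-c) • (1 + P * (-c⁻¹ • (Pᵀ * A)))).det := by
        rw [← hPP, smul_add, Matrix.mul_smul, smul_smul, neg_mul_neg, mul_inv_cancel₀ hc,
          one_smul, Matrix.mul_assoc, neg_smul, neg_add_eq_sub]
    _ = (-c) ^ Fintype.card n * (1 - c⁻¹ • A.submatrix e e).det := by
        rw [det_smul, det_one_add_mul_comm, Matrix.smul_mul, hPAP, neg_smul, ← sub_eq_add_neg]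

end Matrix

section Blowup

variable {n R : Type*} [DecidableEq n] [CommRing R]

/-- The matrix `Δ_X M - 2 Id`, where `Δ_X` is the diagonal matrix of the variables. -/
noncomputable def blowupMatrix (M : Matrix n n R) : Matrix n n (MvPolynomial n R) :=
  of fun i j => X i * C (M i j) - if i = j then C 2 else 0

variable [Fintype n]

noncomputable def blowupPoly (M : Matrix n n R) : MvPolynomial n R :=
  (blowupMatrix M).det

theorem eval_blowupPoly (M : Matrix n n R) (v : n → R) :
    eval v (blowupPoly M) = (diagonal v * M - (2 : R) • 1).det := by
  rw [blowupPoly, RingHom.map_det]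
  congr 1
  ext i j
  by_cases hij : i = j <;> simp [blowupMatrix, hij]

theorem rename_blowupPoly (M : Matrix n n R) (σ : Perm n) :
    rename σ (blowupPoly M) = blowupPoly (M.submatrix σ.symm σ.symm) := by
  have hmap : (blowupMatrix M).map (rename σ)
      = (blowupMatrix (M.submatrix σ.symm σ.symm)).submatrix σ σ := by
    ext i j
    simp [blowupMatrix, σ.injective.eq_iff, apply_ite (rename σ)]
  rw [blowupPoly, blowupPoly, AlgHom.map_det, AlgHom.mapMatrix_apply, hmap,
    det_submatrix_equiv_self]

theorem isSymmetric_blowupPoly {M : Matrix n n R} (hM : ∀ σ : Perm n, M.submatrix σ σ = M) :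
    (blowupPoly M).IsSymmetric := fun σ => by
  rw [rename_blowupPoly, hM]

end Blowup

section BlowupField

variable {n K : Type*} [DecidableEq n] [Fintype n] [Field K] [NeZero (2 : K)]

theorem eval_indicator_pair_blowupPoly {M : Matrix n n K} (hdiag : ∀ i, M i i = 2) {a b : n}
    (hab : a ≠ b) :
    4 * eval ((Set.range ![a, b]).indicator 1) (blowupPoly M)
      = -(-2) ^ Fintype.card n * (M a b * M b a) := by
  rw [eval_blowupPoly, det_diagonal_indicator_mul_sub_smul_one (by simpa) _ two_ne_zero,
    det_fin_two]
  simp only [Matrix.sub_apply, Matrix.smul_apply, submatrix_apply, one_apply_eq,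
    one_apply_ne Fin.zero_ne_one, one_apply_ne Fin.zero_ne_one.symm, Matrix.cons_val_zero,
    Matrix.cons_val_one, hdiag, smul_eq_mul]
  field_simp
  ring

theorem mul_eq_of_isSymmetric_blowupPoly {M : Matrix n n K} (hsym : (blowupPoly M).IsSymmetric)
    (hdiag : ∀ i, M i i = 2) {a b c d : n} (hab : a ≠ b) (hcd : c ≠ d) :
    M a b * M b a = M c d * M d c := by
  obtain ⟨σ, hσ⟩ := Perm.exists_extending_pair ![a, b] ![c, d] (by simpa) (by simpa)
  have hcomp :
      (Set.range ![c, d]).indicator 1 ∘ σ = (Set.range ![a, b]).indicator (1 : n → K) := by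
    funext r
    simp only [Function.comp_apply, Set.indicator_apply, Set.mem_range, Pi.one_apply, ← hσ,
      σ.injective.eq_iff]
  have h := congrArg (eval ((Set.range ![c, d]).indicator 1)) (hsym σ)
  rw [eval_rename, hcomp] at h
  have hpow : -(-2 : K) ^ Fintype.card n ≠ 0 := by simp [two_ne_zero]
  refine mul_left_cancel₀ hpow ?_
  rw [← eval_indicator_pair_blowupPoly hdiag hab, ← eval_indicator_pair_blowupPoly hdiag hcd, h]

end BlowupField

theorem blowup_poly_symmetric_iff_complete_general (k : ℕ)
    (G : SimpleGraph (Fin k)) (hG : G.Connected)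
    (M : Matrix (Fin k) (Fin k) ℝ)
    (hM : ∀ i j, M i j = (G.dist i j : ℝ) + if i = j then 2 else 0)
    (p : MvPolynomial (Fin k) ℝ)
    (hp : p = Matrix.det (Matrix.of fun i j : Fin k =>
      X i * C (M i j) - if i = j then (C 2 : MvPolynomial (Fin k) ℝ) else 0)) :
    p.IsSymmetric ↔ G = ⊤ := by
  have hdiag : ∀ i, M i i = 2 := by simp [hM]
  change p = blowupPoly M at hp
  subst hp
  constructor
  · intro hsym
    by_contra hne
    obtain ⟨c, d, hcd, hnadj⟩ := SimpleGraph.ne_top_iff_exists_not_adj.mp hne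
    have : Nontrivial (Fin k) := nontrivial_of_ne c d hcd
    obtain ⟨b, hcb⟩ := hG.preconnected.exists_adj_of_nontrivial c
    have h := mul_eq_of_isSymmetric_blowupPoly hsym hdiag hcb.ne hcd
    have hdist : (1 : ℝ) < G.dist c d := by
      exact_mod_cast hG.one_lt_dist_of_ne_of_not_adj hcd hnadj
    simp only [hM, SimpleGraph.dist_eq_one_iff_adj.mpr hcb,
      SimpleGraph.dist_eq_one_iff_adj.mpr hcb.symm, SimpleGraph.dist_comm (u := d),
      if_neg hcb.ne, if_neg hcb.ne.symm, if_neg hcd, if_neg hcd.symm, Nat.cast_one,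
      add_zero] at h
    nlinarith
  · rintro rfl
    refine isSymmetric_blowupPoly fun σ => ?_
    ext i j
    simp [hM, SimpleGraph.dist_top, σ.injective.eq_iff]

/-- the blowup polynomial `p_G = det(Δ_n M_G − 2 Id)` of a finite simple
connected graph `G` on `k ≥ 2` vertices is a symmetric polynomial iff `G` is complete. -/
theorem blowup_poly_symmetric_iff_complete (k : ℕ) (hk : 2 ≤ k)
    (G : SimpleGraph (Fin k)) [DecidableRel G.Adj] (hG : G.Connected)
    (M : Matrix (Fin k) (Fin k) ℝ)
    (hM : ∀ i j, M i j = (G.dist i j : ℝ) + if i = j then 2 else 0)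
    (p : MvPolynomial (Fin k) ℝ)
    (hp : p = Matrix.det (Matrix.of fun i j : Fin k =>
      X i * C (M i j) - if i = j then (C 2 : MvPolynomial (Fin k) ℝ) else 0)) :
    p.IsSymmetric ↔ G = ⊤ :=
  blowup_poly_symmetric_iff_complete_general k G hG M hM p hp
end

section
/- The Hessian at the origin of the blowup polynomial recovers the graph: (∂_{n_i} ∂_{n_j} p_G)(0) = (−2)^k − (−2)^{k−2}·(M_G)_{ij}² for i ≠ j, where p_G(n) = det(Δ_n M_G − 2·Id_k). In particular, the polynomial p_G determines the matrix of squared entries of M_G off the diagonal, hence determines D_G. -/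
/-!
Expand the determinant over permutations `τ`. The term of `τ` is a product of affine factors
`X r * A r (τ r) - c * [r = τ r]`; at the origin, `∂ᵢ∂ⱼ` of it keeps the linear coefficients of
the factors `i` and `j` and the constant terms of all the others. It therefore vanishes unless `τ`
fixes every `r ∉ {i, j}`, i.e. unless `τ = 1` or `τ = (i j)`, and these two terms add up to
`(-c)^(k-2) * (A i i * A j j - A i j * A j i)`. For `A = M_G`, `c = 2` this is
`(-2)^(k-2) * (4 - (M_G)ᵢⱼ²)`.
-/

open MvPolynomial Finset Matrix

theorem Equiv.Perm.eq_one_or_eq_swap_of_forall_apply_eq_self {α : Type*} [DecidableEq α]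
    {σ : Equiv.Perm α} {i j : α} (h : ∀ r, r ≠ i → r ≠ j → σ r = r) :
    σ = 1 ∨ σ = Equiv.swap i j := by
  have maps_pair : ∀ x, x = i ∨ x = j → σ x = i ∨ σ x = j := by
    intro x hx
    by_contra! hσx
    have := σ.injective (h _ hσx.1 hσx.2)
    rcases hx with rfl | rfl <;> simp_all
  rcases maps_pair i (.inl rfl) with hi | hi
  · left
    ext r
    grind [Equiv.Perm.one_apply, Equiv.apply_eq_iff_eq]
  · right
    ext r
    grind [Equiv.apply_eq_iff_eq]

section

variable {σ R : Type*} [CommRing R] [DecidableEq σ]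

lemma pderiv_X_mul_C_sub_C (t r : σ) (a b : R) :
    pderiv t (X r * C a - C b) = if t = r then C a else 0 := by
  simp [pderiv_X, Pi.single_apply, eq_comm]

lemma pderiv_prod_X_mul_C_sub_C_of_notMem {s : Finset σ} {t : σ} (ht : t ∉ s) (a b : σ → R) :
    pderiv t (∏ r ∈ s, (X r * C (a r) - C (b r))) = 0 := by
  induction s using Finset.induction_on with
  | empty => simp
  | insert r s hr ih =>
    rw [mem_insert, not_or] at ht
    rw [prod_insert hr, Derivation.leibniz, ih ht.2, pderiv_X_mul_C_sub_C, if_neg ht.1]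
    simp

lemma eval_zero_pderiv_pderiv_prod_X_mul_C_sub_C [Fintype σ] {i j : σ} (hij : i ≠ j)
    (a b : σ → R) :
    eval 0 (pderiv i (pderiv j (∏ r, (X r * C (a r) - C (b r)))))
      = a i * a j * ∏ r ∈ (univ.erase j).erase i, -b r := by
  set f : σ → MvPolynomial σ R := fun r => X r * C (a r) - C (b r)
  set Q := ∏ r ∈ (univ.erase j).erase i, f r
  have hi_mem : i ∈ univ.erase j := mem_erase.2 ⟨hij, mem_univ i⟩
  have hQi : pderiv i Q = 0 := pderiv_prod_X_mul_C_sub_C_of_notMem (by simp) a b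
  have hQj : pderiv j Q = 0 := pderiv_prod_X_mul_C_sub_C_of_notMem (by simp) a b
  have hderiv_j : pderiv j (f j * (f i * Q)) = C (a j) * (f i * Q) := by
    simp only [f, Derivation.leibniz, hQj, pderiv_X_mul_C_sub_C, if_neg hij.symm, if_true,
      smul_eq_mul]
    ring
  have hderiv_i : pderiv i (C (a j) * (f i * Q)) = C (a j) * (C (a i) * Q) := by
    simp only [f, Derivation.leibniz, hQi, pderiv_X_mul_C_sub_C, if_true, pderiv_C, smul_eq_mul]
    ring
  rw [← mul_prod_erase _ _ (mem_univ j), ← mul_prod_erase _ _ hi_mem, hderiv_j, hderiv_i]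
  simp only [Q, f, eval_zero, map_mul, map_prod, map_sub, constantCoeff_C, constantCoeff_X,
    zero_mul, zero_sub]
  ring

theorem eval_zero_pderiv_pderiv_det [Fintype σ] (A : Matrix σ σ R) (c : R) {i j : σ}
    (hij : i ≠ j) :
    eval 0 (pderiv i (pderiv j (of fun r s => X r * C (A r s) - if r = s then C c else 0).det))
      = (-c) ^ (Fintype.card σ - 2) * (A i i * A j j - A i j * A j i) := by
  have hentry : ∀ r s, (X r * C (A r s) - if r = s then C c else 0 : MvPolynomial σ R)
      = X r * C (A r s) - C (if r = s then c else 0) := fun r s => by split_ifs <;> simp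
  rw [← det_transpose, det_apply]
  simp only [hentry, transpose_apply, of_apply, map_sum,
    Units.smul_def, map_zsmul, eval_zero_pderiv_pderiv_prod_X_mul_C_sub_C hij]
  set S := (univ.erase j).erase i
  have hS : ∀ r, r ∈ S ↔ r ≠ i ∧ r ≠ j := by simp [S]
  have hcard : #S = Fintype.card σ - 2 := by
    rw [card_erase_of_mem (mem_erase.2 ⟨hij, mem_univ i⟩), card_erase_of_mem (mem_univ j),
      card_univ, Nat.sub_sub]
  have hprod : ∀ τ : Equiv.Perm σ, (∏ r ∈ S, -if r = τ r then c else 0)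
      = if ∀ r ∈ S, r = τ r then (-c) ^ (Fintype.card σ - 2) else 0 := fun τ => by
    simp only [neg_ite, neg_zero, prod_ite_zero, prod_const, hcard]
  rw [Fintype.sum_eq_add 1 (Equiv.swap i j) (Ne.symm (Equiv.swap_eq_one_iff.not.2 hij))]
  · have hfix_one : ∀ r ∈ S, r = (1 : Equiv.Perm σ) r := fun r _ => rfl
    have hfix_swap : ∀ r ∈ S, r = Equiv.swap i j r := fun r hr =>
      (Equiv.swap_apply_of_ne_of_ne ((hS r).1 hr).1 ((hS r).1 hr).2).symm
    rw [hprod, hprod, if_pos hfix_one, if_pos hfix_swap]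
    simp only [Equiv.Perm.sign_one, Equiv.Perm.sign_swap hij, Equiv.Perm.one_apply,
      Equiv.swap_apply_left, Equiv.swap_apply_right, Units.val_one, Units.val_neg, one_smul,
      neg_smul]
    ring
  · rintro τ ⟨hτ1, hτswap⟩
    have : ¬ ∀ r ∈ S, r = τ r := fun hfix =>
      (Equiv.Perm.eq_one_or_eq_swap_of_forall_apply_eq_self
        fun r hri hrj => (hfix r ((hS r).2 ⟨hri, hrj⟩)).symm).elim hτ1 hτswap
    simp [hprod, this]

end

theorem blowup_poly_hessian_general (k : ℕ) (G : SimpleGraph (Fin k))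
    (M : Matrix (Fin k) (Fin k) ℝ)
    (hM : ∀ i j, M i j = (G.dist i j : ℝ) + if i = j then 2 else 0)
    (p : MvPolynomial (Fin k) ℝ)
    (hp : p = Matrix.det (Matrix.of fun i j : Fin k =>
      X i * C (M i j) - if i = j then (C 2 : MvPolynomial (Fin k) ℝ) else 0)) :
    ∀ i j : Fin k, i ≠ j →
      eval (fun _ => (0 : ℝ)) (pderiv i (pderiv j p))
        = (-2 : ℝ) ^ k - (-2 : ℝ) ^ (k - 2) * (M i j) ^ 2 := by
  intro i j hij
  obtain ⟨m, rfl⟩ : ∃ m, k = m + 2 :=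
    ⟨k - 2, by have := Fin.val_ne_of_ne hij; omega⟩
  have hdiag : ∀ r, M r r = 2 := fun r => by simp [hM]
  have hsymm : M j i = M i j := by simp [hM, G.dist_comm, eq_comm]
  rw [hp, ← Pi.zero_def, eval_zero_pderiv_pderiv_det M 2 hij, Fintype.card_fin,
    Nat.add_sub_cancel, hdiag, hdiag, hsymm]
  ring

/-- the Hessian of the blowup polynomial at the origin recovers `G`:
for `i ≠ j`, `(∂ᵢ∂ⱼ p_G)(0) = (−2)^k − (−2)^(k−2)·(M_G)ᵢⱼ²`. -/
theorem blowup_poly_hessian (k : ℕ) (hk : 2 ≤ k) (G : SimpleGraph (Fin k))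
    [DecidableRel G.Adj] (hG : G.Connected)
    (M : Matrix (Fin k) (Fin k) ℝ)
    (hM : ∀ i j, M i j = (G.dist i j : ℝ) + if i = j then 2 else 0)
    (p : MvPolynomial (Fin k) ℝ)
    (hp : p = Matrix.det (Matrix.of fun i j : Fin k =>
      X i * C (M i j) - if i = j then (C 2 : MvPolynomial (Fin k) ℝ) else 0)) :
    ∀ i j : Fin k, i ≠ j →
      eval (fun _ => (0 : ℝ)) (pderiv i (pderiv j p))
        = (-2 : ℝ) ^ k - (-2 : ℝ) ^ (k - 2) * (M i j) ^ 2 :=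
  blowup_poly_hessian_general k G M hM p hp
end

section
/- If G is a finite simple connected graph whose matrix M_G = D_G + 2·Id is positive semidefinite, then the reflected polynomial q(z_1,...,z_k) := p_G(−z_1,...,−z_k)·(−1)^k has all coefficients nonnegative, where p_G(n) = det(Δ_n M_G − 2·Id_k). -/
/-!
Substituting `z ↦ -z` and multiplying by `(-1)^k` turns `Δ_z M - 2·Id` into `Δ_z M + 2·Id`.
Expanding that determinant multilinearly in its rows, the coefficient of `∏_{i ∈ I} z_i` is
`2^(k - |I|) · det M_{I×I}`, and principal minors of a positive semidefinite matrix are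
nonnegative.
-/

open MvPolynomial

namespace Matrix

variable {n R : Type*} [Fintype n] [DecidableEq n] [CommRing R]

theorem det_diagonal_mul_add_diagonal (x y : n → R) (A : Matrix n n R) :
    det (diagonal x * A + diagonal y) =
      ∑ s : Finset n, (∏ i ∈ s, x i) * (∏ i ∈ sᶜ, y i) *
        (A.submatrix ((↑) : s → n) ((↑) : s → n)).det := by
  have hrows : (fun i => (diagonal x * A + diagonal y) i) =
      (fun i => x i • A i) + (fun i => y i • (1 : Matrix n n R) i) := by
    ext i j
    simp [diagonal_mul, diagonal_apply, one_apply]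
  change detRowAlternating (fun i => (diagonal x * A + diagonal y) i) = _
  rw [hrows, AlternatingMap.map_add_univ]
  refine Finset.sum_congr rfl fun s _ => ?_
  have hsmul : s.piecewise (fun i => x i • A i) (fun i => y i • (1 : Matrix n n R) i) =
      fun i => s.piecewise x y i • s.piecewise A.row (1 : Matrix n n R).row i := by
    ext i j
    by_cases hi : i ∈ s <;> simp [hi]
  rw [hsmul, AlternatingMap.map_smul_univ, Finset.prod_piecewise, Finset.univ_inter,
    ← Finset.compl_eq_univ_sdiff, smul_eq_mul]
  exact congrArg _ (det_piecewise_one_eq_submatrix_det A s)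

end Matrix

theorem MvPolynomial.coeff_prod_X_mul_C_nonneg {σ R : Type*} [CommSemiring R] [PartialOrder R]
    (s : Finset σ) {c : R} (hc : 0 ≤ c) (m : σ →₀ ℕ) :
    0 ≤ ((∏ i ∈ s, X i) * C c : MvPolynomial σ R).coeff m := by
  classical
  have hmono : (∏ i ∈ s, X i : MvPolynomial σ R) = monomial (∑ i ∈ s, Finsupp.single i 1) 1 := by
    rw [monomial_sum_one]
    rfl
  rw [hmono, mul_comm, C_mul_monomial, mul_one, coeff_monomial]
  split_ifs
  · exact hc
  · exact le_rfl

theorem psd_gives_nonneg_reflected_coeffs_general (k : ℕ)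
    (M : Matrix (Fin k) (Fin k) ℝ)
    (hpsd : M.PosSemidef)
    (p q : MvPolynomial (Fin k) ℝ)
    (hp : p = Matrix.det (Matrix.of fun i j : Fin k =>
      X i * C (M i j) - if i = j then (C 2 : MvPolynomial (Fin k) ℝ) else 0))
    (hq : q = (-1 : ℝ) ^ k • aeval (fun i => -(X i : MvPolynomial (Fin k) ℝ)) p) :
    ∀ m : Fin k →₀ ℕ, 0 ≤ q.coeff m := by
  set B : Matrix (Fin k) (Fin k) (MvPolynomial (Fin k) ℝ) :=
    Matrix.diagonal X * M.map C + Matrix.diagonal fun _ => C 2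
  have hreflect : (Matrix.of fun i j : Fin k =>
      X i * C (M i j) - if i = j then (C 2 : MvPolynomial (Fin k) ℝ) else 0).map
        (aeval fun i => -X i) = -B := by
    ext i j : 1
    by_cases hij : i = j <;> simp [B, hij, Matrix.diagonal_mul, sub_eq_add_neg, add_comm]
  have hqB : q = B.det := by
    rw [hq, hp, AlgHom.map_det, AlgHom.mapMatrix_apply, hreflect, Matrix.det_neg,
      Fintype.card_fin, smul_eq_C_mul, ← mul_assoc]
    simp [← mul_pow]
  intro m
  rw [hqB, Matrix.det_diagonal_mul_add_diagonal, coeff_sum]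
  refine Finset.sum_nonneg fun s _ => ?_
  rw [Matrix.submatrix_map, ← RingHom.mapMatrix_apply, ← RingHom.map_det, Finset.prod_const,
    ← map_pow, mul_assoc, ← map_mul]
  exact coeff_prod_X_mul_C_nonneg s (mul_nonneg (by positivity) (hpsd.submatrix _).det_nonneg) m

/-- if `M_G = D_G + 2·Id` is positive semidefinite, then the reflected
polynomial `(−1)^k · p_G(−z₁, …, −z_k)` has all coefficients nonnegative. -/
theorem psd_gives_nonneg_reflected_coeffs (k : ℕ) (G : SimpleGraph (Fin k))
    [DecidableRel G.Adj] (hG : G.Connected)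
    (M : Matrix (Fin k) (Fin k) ℝ)
    (hM : ∀ i j, M i j = (G.dist i j : ℝ) + if i = j then 2 else 0)
    (hpsd : M.PosSemidef)
    (p q : MvPolynomial (Fin k) ℝ)
    (hp : p = Matrix.det (Matrix.of fun i j : Fin k =>
      X i * C (M i j) - if i = j then (C 2 : MvPolynomial (Fin k) ℝ) else 0))
    (hq : q = (-1 : ℝ) ^ k • aeval (fun i => -(X i : MvPolynomial (Fin k) ℝ)) p) :
    ∀ m : Fin k →₀ ℕ, 0 ≤ q.coeff m :=
  psd_gives_nonneg_reflected_coeffs_general k M hpsd p q hp hq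
end

section
/- For the complete bipartite graph K_{r,s} viewed as the blowup K_2[(r,s)] of an edge, the 2-variable blowup polynomial of K_2 is p_{K_2}(n_1, n_2) = det(diag(n_1,n_2)·M − 2·Id_2) with M = [[2,1],[1,2]], which equals 3 n_1 n_2 − 4 n_1 − 4 n_2 + 4; hence det(D_{K_{r,s}}) = (−2)^{r+s−2}·(3rs − 4r − 4s + 4). -/
/-!
Write `D = U M Uᵀ - 2` with `U` the `0/1` matrix recording which part each vertex lies in and
`M = D_{K₂} + 2 = [[2,1],[1,2]]`. Sylvester's identity `tⁿ det(t - AB) = tᵐ det(t - BA)`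
(for `A` of size `m × n`) with `A = U M`, `B = Uᵀ` moves the determinant to the `2 × 2` matrix `Uᵀ U M - 2 = diag(r, s) M - 2`,
i.e. to the blowup polynomial of `K₂` evaluated at the part sizes `(r, s)`.
-/

open MvPolynomial

namespace Matrix

variable {m n R : Type*} [Fintype m] [Fintype n] [DecidableEq m] [DecidableEq n] [CommRing R]

theorem pow_card_mul_det_scalar_sub_mul_comm (A : Matrix m n R) (B : Matrix n m R) (t : R) :
    t ^ Fintype.card n * (scalar m t - A * B).det =
      t ^ Fintype.card m * (scalar n t - B * A).det := by
  simpa [eval_charpoly] using congrArg (Polynomial.eval t) (charpoly_mul_comm' A B)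

theorem neg_pow_card_mul_det_mul_sub_scalar_comm (A : Matrix m n R) (B : Matrix n m R) (t : R) :
    (-t) ^ Fintype.card n * (A * B - scalar m t).det =
      (-t) ^ Fintype.card m * (B * A - scalar n t).det := by
  simpa only [map_neg, Matrix.neg_mul, Matrix.mul_neg, sub_neg_eq_add, neg_add_eq_sub] using
    pow_card_mul_det_scalar_sub_mul_comm (-A) B (-t)

end Matrix

open Matrix Finset

section Blowup

variable {ι κ R : Type*} [DecidableEq κ] [CommRing R]

/-- For `M = D_G + 2` this is the blowup polynomial `p_G(n) = det(diag(n) M - 2)` of `G`. -/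
noncomputable def blowupPolynomial [Fintype κ] (M : Matrix κ κ R) : MvPolynomial κ R :=
  (diagonal X * M.map C - 2).det

theorem eval_blowupPolynomial [Fintype κ] (M : Matrix κ κ R) (n : κ → R) :
    eval n (blowupPolynomial M) = (diagonal n * M - 2).det := by
  rw [blowupPolynomial, RingHom.map_det]
  congr 1
  ext i j
  by_cases h : i = j <;> simp [h, diagonal_mul, ← diagonal_ofNat]

theorem one_submatrix_mul_mul_one_submatrix [Fintype κ] (π : ι → κ) (M : Matrix κ κ R) :
    (1 : Matrix κ κ R).submatrix π id * M * (1 : Matrix κ κ R).submatrix id π =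
      M.submatrix π π := by
  ext i j
  simp [mul_apply, one_apply]

theorem one_submatrix_mul_one_submatrix [Fintype ι] (π : ι → κ) :
    (1 : Matrix κ κ R).submatrix id π * (1 : Matrix κ κ R).submatrix π id =
      diagonal fun k => (#{i | π i = k} : R) := by
  ext k l
  rw [mul_apply, diagonal_apply]
  simp only [submatrix_apply, id_eq, one_apply, ite_zero_mul_ite_zero, mul_one]
  split_ifs with h
  · subst h
    simp [Finset.sum_boole, eq_comm]
  · exact Finset.sum_eq_zero fun i _ => if_neg fun hi => h (hi.1.trans hi.2)

/-- The blowup formula `det D_{G[n]} = (-2)^(Σ (n_k - 1)) p_G(n)`, with `π` sending each vertex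
of the blowup to the vertex of `G` it replaces; multiplied out, it needs no subtraction. -/
theorem neg_two_pow_card_mul_det_submatrix_sub_two [Fintype ι] [Fintype κ] [DecidableEq ι]
    (π : ι → κ) (M : Matrix κ κ R) :
    (-2) ^ Fintype.card κ * (M.submatrix π π - 2).det =
      (-2) ^ Fintype.card ι * eval (fun k => (#{i | π i = k} : R)) (blowupPolynomial M) := by
  rw [eval_blowupPolynomial, ← one_submatrix_mul_one_submatrix, ←
    one_submatrix_mul_mul_one_submatrix, Matrix.mul_assoc (submatrix 1 id π)]
  exact neg_pow_card_mul_det_mul_sub_scalar_comm _ _ (2 : R)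

theorem blowupPolynomial_edge :
    blowupPolynomial (of fun i j : Fin 2 => if i = j then (2 : R) else 1) =
      C 3 * X 0 * X 1 - C 4 * X 0 - C 4 * X 1 + C 4 := by
  rw [blowupPolynomial, det_fin_two]
  simp [diagonal_mul, ← diagonal_ofNat, map_ofNat]
  ring

end Blowup

/-- the blowup polynomial of the edge `K₂` (with `M = [[2,1],[1,2]]`) is
`3 n₁ n₂ − 4 n₁ − 4 n₂ + 4`; consequently for the complete bipartite graph `K_{r,s}`,
`det D_{K_{r,s}} = (−2)^(r+s−2) · (3rs − 4r − 4s + 4)`. -/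
theorem blowup_poly_K2_and_det_complete_bipartite (r s : ℕ) (hr : 1 ≤ r) (hs : 1 ≤ s)
    (D : Matrix (Fin r ⊕ Fin s) (Fin r ⊕ Fin s) ℝ)
    (hD : ∀ a b, D a b =
      if a = b then 0 else
        match a, b with
        | Sum.inl _, Sum.inl _ => 2
        | Sum.inr _, Sum.inr _ => 2
        | _, _ => 1) :
    Matrix.det (Matrix.of fun i j : Fin 2 =>
        X i * C (if i = j then (2 : ℝ) else 1) -
          if i = j then (C 2 : MvPolynomial (Fin 2) ℝ) else 0)
      = C 3 * X 0 * X 1 - C 4 * X 0 - C 4 * X 1 + C 4 ∧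
    D.det = (-2 : ℝ) ^ (r + s - 2) *
      (3 * (r : ℝ) * s - 4 * r - 4 * s + 4) := by
  set M : Matrix (Fin 2) (Fin 2) ℝ := of fun i j => if i = j then 2 else 1
  set π : Fin r ⊕ Fin s → Fin 2 := Sum.elim (fun _ => 0) (fun _ => 1)
  constructor
  · rw [← blowupPolynomial_edge, blowupPolynomial]
    congr 1
    ext i j : 1
    by_cases h : i = j <;> simp [h, diagonal_mul, ← diagonal_ofNat, map_ofNat]
  · have hDM : D = M.submatrix π π - 2 := by
      ext (a | a) (b | b) <;> simp [hD, M, π, ← diagonal_ofNat, diagonal_apply] <;>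
        split_ifs <;> norm_num
    have hsizes : (fun k => (#{i | π i = k} : ℝ)) = ![(r : ℝ), s] := by
      ext k
      fin_cases k <;> simp [π, Finset.card_filter, Fintype.sum_sum_type, -Finset.sum_boole]
    have key := neg_two_pow_card_mul_det_submatrix_sub_two π M
    rw [← hDM, hsizes, blowupPolynomial_edge, Fintype.card_sum, Fintype.card_fin,
      Fintype.card_fin, Fintype.card_fin, ← Nat.sub_add_cancel (show 2 ≤ r + s by omega),
      pow_add] at key
    simp only [map_add, map_sub, map_mul, eval_C, eval_X, cons_val_zero, cons_val_one] at key
    linear_combination key / 4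
end
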